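/- arXiv:1909.01850 — 2 statements merged into one kernel-verified Lean document; each statement's English description precedes it below -/
import Mathlib

section
/- Let F be a finite field, V a 2n-dimensional F-vector space, and fix subspaces V₁, V₂ of dimension n with V = V₁ ⊕ V₂. Consider triples consisting of the pair (V₁, V₂) together with an n-dimensional subspace W ⊆ V, with GL(V) acting simultaneously on all three subspaces. Two n-dimensional subspaces W, W′ lie in the same orbit of the simultaneous stabilizer of V₁ and V₂ in GL(V) if and only if dim(W ∩ V₁) = dim(W′ ∩ V₁) and dim(W ∩ V₂) = dim(W′ ∩ V₂). Moreover, a pair (r, s) of natural numbers arises as (dim(W ∩ V₁), dim(W ∩ V₂)) for some n-dimensional W if and only if r + s ≤ n. -/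
/-!
Put `r = dim (W ∩ V₁)`, `s = dim (W ∩ V₂)` and `t = dim W - r - s`. Let `C` be a complement of
`(W ∩ V₁) ⊕ (W ∩ V₂)` in `W`. Both projections `p₁ : V → V₁`, `p₂ : V → V₂` are injective on `C`,
and `p₁ C` meets `W ∩ V₁` (resp. `p₂ C` meets `W ∩ V₂`) trivially. Completing bases of
`(W ∩ V₁) ⊕ p₁ C` to `V₁` and of `(W ∩ V₂) ⊕ p₂ C` to `V₂` gives a basis of `V` in which `W` is
spanned by the basis of `W ∩ V₁`, that of `W ∩ V₂`, and the `t` vectors `p₁ c + p₂ c = c`.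
So the triple `(V₁, V₂, W)` is determined up to `GL(V)` by `r`, `s`, `t` (and `dim V₁`, `dim V₂`),
and conversely the same normal form realises every `(r, s)` with `r + s ≤ n`;
`r + s ≤ dim W` always holds since `W ∩ V₁` and `W ∩ V₂` are independent.
-/

open Module Submodule Set

section Orbits

variable {F V : Type*} [Field F] [AddCommGroup V] [Module F V]

lemma exists_linearIndependent_span_eq {ι : Type*} [Fintype ι] (X : Submodule F V)
    [FiniteDimensional F X] (h : finrank F X = Fintype.card ι) :
    ∃ f : ι → V, LinearIndependent F f ∧ span F (range f) = X := by
  let b := (finBasisOfFinrankEq F X h).reindex (Fintype.equivFin ι).symm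
  refine ⟨X.subtype ∘ b, b.linearIndependent.map' _ X.ker_subtype, ?_⟩
  rw [range_comp, ← map_span, b.span_eq, Submodule.map_top, range_subtype]

lemma exists_linearIndependent_sum_elim_span_eq [FiniteDimensional F V]
    {ι κ : Type*} [Fintype ι] [Fintype κ] {f : ι → V} (hf : LinearIndependent F f)
    {X : Submodule F V} (hfX : span F (range f) ≤ X)
    (h : Fintype.card ι + Fintype.card κ = finrank F X) :
    ∃ g : κ → V, LinearIndependent F (Sum.elim f g) ∧ span F (range (Sum.elim f g)) = X := by
  obtain ⟨Y, hdisj, hsup⟩ := IsModularLattice.exists_disjoint_and_sup_eq hfX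
  have hY : finrank F Y = Fintype.card κ := by
    have := finrank_sup_add_finrank_inf_eq (span F (range f)) Y
    rw [hsup, hdisj.eq_bot, finrank_bot, finrank_span_eq_card hf] at this
    omega
  obtain ⟨g, hg, rfl⟩ := exists_linearIndependent_span_eq Y hY
  refine ⟨g, linearIndependent_sum.mpr ⟨hf, hg, hdisj⟩, ?_⟩
  rw [Sum.elim_range, span_union, hsup]

lemma exists_basis_coe_eq_sum_elim {ι₁ ι₂ : Type*} {V₁ V₂ : Submodule F V} (hc : IsCompl V₁ V₂)
    {f₁ : ι₁ → V} {f₂ : ι₂ → V} (hf₁ : LinearIndependent F f₁) (hf₂ : LinearIndependent F f₂)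
    (h₁ : span F (range f₁) = V₁) (h₂ : span F (range f₂) = V₂) :
    ∃ B : Basis (ι₁ ⊕ ι₂) F V, ⇑B = Sum.elim f₁ f₂ := by
  have hli : LinearIndependent F (Sum.elim f₁ f₂) :=
    linearIndependent_sum.mpr ⟨hf₁, hf₂, h₁ ▸ h₂ ▸ hc.disjoint⟩
  have hsp : ⊤ ≤ span F (range (Sum.elim f₁ f₂)) := by
    rw [Sum.elim_range, span_union, h₁, h₂, hc.sup_eq_top]
  exact ⟨Basis.mk hli hsp, Basis.coe_mk _ _⟩

lemma Module.Basis.repr_eq_zero_of_mem_span_range_comp {ι ι' : Type*} (B : Basis ι F V)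
    {e : ι' → ι} {x : V} (hx : x ∈ span F (range (B ∘ e))) {i : ι} (hi : i ∉ range e) :
    B.repr x i = 0 := by
  rw [range_comp, Basis.mem_span_image] at hx
  exact Finsupp.notMem_support_iff.mp fun h => hi (hx h)

lemma exists_linearIndependent_sum_elim_inf [FiniteDimensional F V] {V₁ V₂ W : Submodule F V}
    (h : Disjoint V₁ V₂) {r s t : ℕ} (hr : finrank F ↥(W ⊓ V₁) = r)
    (hs : finrank F ↥(W ⊓ V₂) = s) (hW : finrank F W = r + s + t) :
    ∃ (a : Fin r → V) (b : Fin s → V) (w : Fin t → V),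
      LinearIndependent F (Sum.elim (Sum.elim a b) w) ∧
      span F (range (Sum.elim (Sum.elim a b) w)) = W ∧
      span F (range a) = W ⊓ V₁ ∧ span F (range b) = W ⊓ V₂ := by
  obtain ⟨a, ha, haW⟩ := exists_linearIndependent_span_eq (ι := Fin r) (W ⊓ V₁) (by simpa using hr)
  obtain ⟨b, hb, hbW⟩ := exists_linearIndependent_span_eq (ι := Fin s) (W ⊓ V₂) (by simpa using hs)
  have hab : LinearIndependent F (Sum.elim a b) :=
    linearIndependent_sum.mpr ⟨ha, hb, haW ▸ hbW ▸ h.mono inf_le_right inf_le_right⟩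
  have habW : span F (range (Sum.elim a b)) ≤ W := by
    rw [Sum.elim_range, span_union, haW, hbW]
    exact sup_le inf_le_left inf_le_left
  obtain ⟨w, habw, habwW⟩ := exists_linearIndependent_sum_elim_span_eq (κ := Fin t) hab habW
    (by simp only [Fintype.card_sum, Fintype.card_fin]; omega)
  exact ⟨a, b, w, habw, habwW, haW, hbW⟩

lemma linearIndependent_sum_elim_projection {ι κ : Type*} {V₁ V₂ W : Submodule F V}
    (hc : IsCompl V₁ V₂) {a : ι → V} {w : κ → V} (ha : LinearIndependent F a)
    (haW : span F (range a) = W ⊓ V₁) (hw : LinearIndependent F w) (hwW : span F (range w) ≤ W)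
    (hdisj : Disjoint (span F (range w)) (W ⊓ V₁ ⊔ W ⊓ V₂)) :
    LinearIndependent F (Sum.elim a (V₁.projection V₂ hc ∘ w)) := by
  set P := V₁.projection V₂ hc
  have hker : Disjoint (span F (range w)) (LinearMap.ker P) := by
    rw [ker_projection, disjoint_def]
    intro x hxw hx₂
    exact disjoint_def.mp hdisj x hxw (mem_sup_right ⟨hwW hxw, hx₂⟩)
  refine linearIndependent_sum.mpr ⟨ha, hw.map hker, ?_⟩
  rw [Sum.elim_comp_inl, Sum.elim_comp_inr, range_comp, ← map_span, haW, disjoint_def]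
  rintro _ hy ⟨x, hxw, rfl⟩
  have hx : x - P x ∈ W ⊓ V₂ := by
    refine ⟨sub_mem (hwW hxw) hy.1, ?_⟩
    rw [← projection_eq_self_sub_projection hc]
    exact projection_apply_mem _ _
  have : x = 0 := disjoint_def.mp hdisj x hxw (by
    simpa using add_mem (mem_sup_left hy) (mem_sup_right hx))
  simp [this]

lemma finrank_map_inf_map {V' : Type*} [AddCommGroup V'] [Module F V'] (g : V ≃ₗ[F] V')
    (W X : Submodule F V) :
    finrank F ↥(W.map (g : V →ₗ[F] V') ⊓ X.map (g : V →ₗ[F] V')) = finrank F ↥(W ⊓ X) := by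
  rw [← map_inf _ g.injective, LinearEquiv.finrank_map_eq]

lemma finrank_inf_add_finrank_inf_le [FiniteDimensional F V] {V₁ V₂ : Submodule F V}
    (h : Disjoint V₁ V₂) (W : Submodule F V) :
    finrank F ↥(W ⊓ V₁) + finrank F ↥(W ⊓ V₂) ≤ finrank F W := by
  have hbot : W ⊓ V₁ ⊓ (W ⊓ V₂) = ⊥ := (h.mono inf_le_right inf_le_right).eq_bot
  have := finrank_sup_add_finrank_inf_eq (W ⊓ V₁) (W ⊓ V₂)
  rw [hbot, finrank_bot, add_zero] at this
  have hle : finrank F ↥(W ⊓ V₁ ⊔ W ⊓ V₂) ≤ finrank F W :=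
    Submodule.finrank_mono (sup_le inf_le_left inf_le_left)
  omega

lemma finrank_le_finrank_add_finrank_inf [FiniteDimensional F V] {V₁ V₂ : Submodule F V}
    (hc : IsCompl V₁ V₂) (W : Submodule F V) :
    finrank F W ≤ finrank F V₁ + finrank F ↥(W ⊓ V₂) := by
  have := finrank_sup_add_finrank_inf_eq W V₂
  have := (W ⊔ V₂).finrank_le
  have := finrank_add_eq_of_isCompl hc
  omega

variable {α β τ π κ : Type*}

/-- With `b`'s `inl`-part a basis of `V₁` and its `inr`-part a basis of `V₂`, this family spans the
normal form of `W`: the `α`-vectors of `V₁`, the `β`-vectors of `V₂`, and for each `k : τ` the sum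
of the two `k`-vectors. -/
def stdFamily (b : ((α ⊕ τ) ⊕ π) ⊕ ((β ⊕ τ) ⊕ κ) → V) : (α ⊕ β) ⊕ τ → V :=
  Sum.elim (Sum.elim (fun i => b (.inl (.inl (.inl i)))) fun j => b (.inr (.inl (.inl j))))
    fun k => b (.inl (.inl (.inr k))) + b (.inr (.inl (.inr k)))

lemma LinearMap.comp_stdFamily {V' : Type*} [AddCommGroup V'] [Module F V'] (φ : V →ₗ[F] V')
    (b : ((α ⊕ τ) ⊕ π) ⊕ ((β ⊕ τ) ⊕ κ) → V) : φ ∘ stdFamily b = stdFamily (φ ∘ b) := by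
  ext ((i | j) | k) <;> simp [stdFamily]

lemma exists_linearEquiv_map_span_eq {V' : Type*} [AddCommGroup V'] [Module F V']
    (B : Basis (((α ⊕ τ) ⊕ π) ⊕ ((β ⊕ τ) ⊕ κ)) F V)
    (B' : Basis (((α ⊕ τ) ⊕ π) ⊕ ((β ⊕ τ) ⊕ κ)) F V') :
    ∃ g : V ≃ₗ[F] V',
      (span F (range (B ∘ .inl))).map (g : V →ₗ[F] V') = span F (range (B' ∘ .inl)) ∧
      (span F (range (B ∘ .inr))).map (g : V →ₗ[F] V') = span F (range (B' ∘ .inr)) ∧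
      (span F (range (stdFamily B))).map (g : V →ₗ[F] V') = span F (range (stdFamily B')) := by
  let g := B.equiv B' (Equiv.refl _)
  have hg : (g : V →ₗ[F] V') ∘ B = B' := funext fun _ => B.equiv_apply ..
  refine ⟨g, ?_, ?_, ?_⟩ <;> rw [map_span, ← range_comp]
  · rw [← Function.comp_assoc, hg]
  · rw [← Function.comp_assoc, hg]
  · rw [LinearMap.comp_stdFamily, hg]

lemma exists_basis_stdFamily [FiniteDimensional F V] {V₁ V₂ W : Submodule F V}
    (hc : IsCompl V₁ V₂) {r s t p q : ℕ} (hr : finrank F ↥(W ⊓ V₁) = r)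
    (hs : finrank F ↥(W ⊓ V₂) = s) (hW : finrank F W = r + s + t)
    (h₁ : finrank F V₁ = r + t + p) (h₂ : finrank F V₂ = s + t + q) :
    ∃ B : Basis (((Fin r ⊕ Fin t) ⊕ Fin p) ⊕ ((Fin s ⊕ Fin t) ⊕ Fin q)) F V,
      span F (range (B ∘ .inl)) = V₁ ∧ span F (range (B ∘ .inr)) = V₂ ∧
        span F (range (stdFamily B)) = W := by
  obtain ⟨a, b, w, habw, habwW, haW, hbW⟩ :=
    exists_linearIndependent_sum_elim_inf hc.disjoint hr hs hW
  obtain ⟨-, hw, hdisj⟩ := linearIndependent_sum.mp habw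
  have hwW : span F (range w) ≤ W := habwW ▸ span_mono (by simp [Sum.elim_range])
  simp only [Sum.elim_comp_inl, Sum.elim_comp_inr, Sum.elim_range, span_union, haW, hbW]
    at hdisj
  set u := V₁.projection V₂ hc ∘ w
  set v := V₂.projection V₁ hc.symm ∘ w
  have hau := linearIndependent_sum_elim_projection hc
    (habw.comp _ (Sum.inl_injective.comp Sum.inl_injective)) haW hw hwW hdisj.symm
  have hbv := linearIndependent_sum_elim_projection hc.symm
    (habw.comp _ (Sum.inl_injective.comp Sum.inr_injective)) hbW hw hwW
    (sup_comm (W ⊓ V₁) _ ▸ hdisj.symm)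
  have hauV : span F (range (Sum.elim a u)) ≤ V₁ := by
    rw [Sum.elim_range, span_union, haW]
    exact sup_le inf_le_right (span_le.mpr (range_subset_iff.mpr fun _ => projection_apply_mem _ _))
  have hbvV : span F (range (Sum.elim b v)) ≤ V₂ := by
    rw [Sum.elim_range, span_union, hbW]
    exact sup_le inf_le_right (span_le.mpr (range_subset_iff.mpr fun _ => projection_apply_mem _ _))
  obtain ⟨d, haud, haudV⟩ := exists_linearIndependent_sum_elim_span_eq (κ := Fin p) hau hauV
    (by simp only [Fintype.card_sum, Fintype.card_fin]; omega)
  obtain ⟨e, hbve, hbveV⟩ := exists_linearIndependent_sum_elim_span_eq (κ := Fin q) hbv hbvV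
    (by simp only [Fintype.card_sum, Fintype.card_fin]; omega)
  obtain ⟨B, hB⟩ := exists_basis_coe_eq_sum_elim hc haud hbve haudV hbveV
  have hstd : stdFamily B = Sum.elim (Sum.elim a b) w := by
    ext ((i | j) | k) <;> simp [hB, stdFamily, projection_add_projection_eq_self]
  exact ⟨B, by rwa [hB, Sum.elim_comp_inl], by rwa [hB, Sum.elim_comp_inr], hstd ▸ habwW⟩

section Coordinates

variable [Fintype α] [Fintype β] [Fintype τ] [Fintype π] [Fintype κ]
  (B : Basis (((α ⊕ τ) ⊕ π) ⊕ ((β ⊕ τ) ⊕ κ)) F V)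

lemma equivFun_sum_smul_stdFamily (c : (α ⊕ β) ⊕ τ → F) :
    B.equivFun (∑ y, c y • stdFamily B y) =
      Sum.elim (Sum.elim (Sum.elim (c ∘ .inl ∘ .inl) (c ∘ .inr)) 0)
        (Sum.elim (Sum.elim (c ∘ .inl ∘ .inr) (c ∘ .inr)) 0) := by
  rw [← LinearEquiv.eq_symm_apply, Basis.equivFun_symm_apply]
  simp [stdFamily, Fintype.sum_sum_type, smul_add, Finset.sum_add_distrib]
  abel

lemma linearIndependent_stdFamily : LinearIndependent F (stdFamily B) := by
  refine Fintype.linearIndependent_iff.mpr fun c hc => ?_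
  have hcoord := equivFun_sum_smul_stdFamily B c
  rw [hc, map_zero] at hcoord
  rintro ((i | j) | k)
  exacts [(congrFun hcoord (.inl (.inl (.inl i)))).symm,
    (congrFun hcoord (.inr (.inl (.inl j)))).symm, (congrFun hcoord (.inl (.inl (.inr k)))).symm]

lemma span_stdFamily_inf_span_inl :
    span F (range (stdFamily B)) ⊓ span F (range (B ∘ .inl)) =
      span F (range fun i => B (.inl (.inl (.inl i)))) := by
  refine le_antisymm ?_ (le_inf (span_mono ?_) (span_mono ?_))
  · rintro x ⟨hxW, hx₁⟩
    obtain ⟨c, rfl⟩ := (mem_span_range_iff_exists_fun F).mp hxW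
    have hcoord i (hi : i ∉ range Sum.inl) := B.repr_eq_zero_of_mem_span_range_comp hx₁ hi
    rw [← B.equivFun_apply, equivFun_sum_smul_stdFamily] at hcoord
    have hβ j : c (.inl (.inr j)) = 0 := hcoord (.inr (.inl (.inl j))) (by simp)
    have hτ k : c (.inr k) = 0 := hcoord (.inr (.inl (.inr k))) (by simp)
    have hx : ∑ y, c y • stdFamily B y = ∑ i, c (.inl (.inl i)) • B (.inl (.inl (.inl i))) := by
      simp [Fintype.sum_sum_type, stdFamily, hβ, hτ]
    rw [hx]
    exact sum_mem fun i _ => smul_mem _ _ (subset_span (mem_range_self i))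
  · rintro _ ⟨i, rfl⟩; exact ⟨.inl (.inl i), rfl⟩
  · rintro _ ⟨i, rfl⟩; exact ⟨.inl (.inl i), rfl⟩

lemma span_stdFamily_inf_span_inr :
    span F (range (stdFamily B)) ⊓ span F (range (B ∘ .inr)) =
      span F (range fun j => B (.inr (.inl (.inl j)))) := by
  refine le_antisymm ?_ (le_inf (span_mono ?_) (span_mono ?_))
  · rintro x ⟨hxW, hx₂⟩
    obtain ⟨c, rfl⟩ := (mem_span_range_iff_exists_fun F).mp hxW
    have hcoord i (hi : i ∉ range Sum.inr) := B.repr_eq_zero_of_mem_span_range_comp hx₂ hi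
    rw [← B.equivFun_apply, equivFun_sum_smul_stdFamily] at hcoord
    have hα i : c (.inl (.inl i)) = 0 := hcoord (.inl (.inl (.inl i))) (by simp)
    have hτ k : c (.inr k) = 0 := hcoord (.inl (.inl (.inr k))) (by simp)
    have hx : ∑ y, c y • stdFamily B y = ∑ j, c (.inl (.inr j)) • B (.inr (.inl (.inl j))) := by
      simp [Fintype.sum_sum_type, stdFamily, hα, hτ]
    rw [hx]
    exact sum_mem fun j _ => smul_mem _ _ (subset_span (mem_range_self j))
  · rintro _ ⟨j, rfl⟩; exact ⟨.inl (.inr j), rfl⟩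
  · rintro _ ⟨j, rfl⟩; exact ⟨.inl (.inl j), rfl⟩

lemma finrank_span_stdFamily :
    finrank F (span F (range (stdFamily B))) =
      Fintype.card α + Fintype.card β + Fintype.card τ := by
  simp [finrank_span_eq_card (linearIndependent_stdFamily B)]

lemma finrank_span_stdFamily_inf_span_inl :
    finrank F ↥(span F (range (stdFamily B)) ⊓ span F (range (B ∘ .inl))) = Fintype.card α := by
  rw [span_stdFamily_inf_span_inl, finrank_span_eq_card]
  exact B.linearIndependent.comp _
    (Sum.inl_injective.comp (Sum.inl_injective.comp Sum.inl_injective))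

lemma finrank_span_stdFamily_inf_span_inr :
    finrank F ↥(span F (range (stdFamily B)) ⊓ span F (range (B ∘ .inr))) = Fintype.card β := by
  rw [span_stdFamily_inf_span_inr, finrank_span_eq_card]
  exact B.linearIndependent.comp _
    (Sum.inr_injective.comp (Sum.inl_injective.comp Sum.inl_injective))

end Coordinates

variable [FiniteDimensional F V] {V₁ V₂ : Submodule F V}

theorem exists_finrank_inf_eq (hc : IsCompl V₁ V₂) {r s t p q : ℕ}
    (h₁ : finrank F V₁ = r + t + p) (h₂ : finrank F V₂ = s + t + q) :
    ∃ W : Submodule F V, finrank F W = r + s + t ∧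
      finrank F ↥(W ⊓ V₁) = r ∧ finrank F ↥(W ⊓ V₂) = s := by
  obtain ⟨f₁, hf₁, hV₁⟩ :=
    exists_linearIndependent_span_eq (ι := (Fin r ⊕ Fin t) ⊕ Fin p) V₁ (by simpa using h₁)
  obtain ⟨f₂, hf₂, hV₂⟩ :=
    exists_linearIndependent_span_eq (ι := (Fin s ⊕ Fin t) ⊕ Fin q) V₂ (by simpa using h₂)
  obtain ⟨B, hB⟩ := exists_basis_coe_eq_sum_elim hc hf₁ hf₂ hV₁ hV₂
  have hB₁ : span F (range (B ∘ .inl)) = V₁ := by rwa [hB, Sum.elim_comp_inl]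
  have hB₂ : span F (range (B ∘ .inr)) = V₂ := by rwa [hB, Sum.elim_comp_inr]
  refine ⟨span F (range (stdFamily B)), ?_, ?_, ?_⟩
  · simpa using finrank_span_stdFamily B
  · rw [← hB₁]; simpa using finrank_span_stdFamily_inf_span_inl B
  · rw [← hB₂]; simpa using finrank_span_stdFamily_inf_span_inr B

theorem exists_linearEquiv_map_eq_of_finrank_eq (hc : IsCompl V₁ V₂) {W W' : Submodule F V}
    (hW : finrank F W = finrank F W') (h₁ : finrank F ↥(W ⊓ V₁) = finrank F ↥(W' ⊓ V₁))
    (h₂ : finrank F ↥(W ⊓ V₂) = finrank F ↥(W' ⊓ V₂)) :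
    ∃ g : V ≃ₗ[F] V, V₁.map (g : V →ₗ[F] V) = V₁ ∧ V₂.map (g : V →ₗ[F] V) = V₂ ∧
      W.map (g : V →ₗ[F] V) = W' := by
  obtain ⟨r, s, t, p, q, hr, hs, ht, hp, hq⟩ : ∃ r s t p q : ℕ, finrank F ↥(W ⊓ V₁) = r ∧
      finrank F ↥(W ⊓ V₂) = s ∧ finrank F W = r + s + t ∧ finrank F V₁ = r + t + p ∧
      finrank F V₂ = s + t + q := by
    have := finrank_inf_add_finrank_inf_le hc.disjoint W
    have := finrank_le_finrank_add_finrank_inf hc W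
    have := finrank_le_finrank_add_finrank_inf hc.symm W
    exact ⟨_, _, finrank F W - finrank F ↥(W ⊓ V₁) - finrank F ↥(W ⊓ V₂),
      finrank F V₁ - (finrank F W - finrank F ↥(W ⊓ V₂)),
      finrank F V₂ - (finrank F W - finrank F ↥(W ⊓ V₁)), rfl, rfl, by omega, by omega, by omega⟩
  obtain ⟨B, hB₁, hB₂, hBW⟩ := exists_basis_stdFamily hc hr hs ht hp hq
  obtain ⟨B', hB'₁, hB'₂, hB'W⟩ := exists_basis_stdFamily hc (h₁ ▸ hr) (h₂ ▸ hs) (hW ▸ ht) hp hq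
  obtain ⟨g, hg₁, hg₂, hgW⟩ := exists_linearEquiv_map_span_eq B B'
  rw [hB₁, hB'₁] at hg₁
  rw [hB₂, hB'₂] at hg₂
  rw [hBW, hB'W] at hgW
  exact ⟨g, hg₁, hg₂, hgW⟩

end Orbits

theorem stmt_5_general (F : Type*) [Field F] (V : Type*)
    [AddCommGroup V] [Module F V] [FiniteDimensional F V]
    (n : ℕ)
    (V₁ V₂ : Submodule F V) (hc : IsCompl V₁ V₂)
    (h₁ : Module.finrank F V₁ = n) (h₂ : Module.finrank F V₂ = n) :
    (∀ W W' : Submodule F V,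
        Module.finrank F W = n → Module.finrank F W' = n →
        ((∃ g : V ≃ₗ[F] V,
            Submodule.map (g : V →ₗ[F] V) V₁ = V₁ ∧
            Submodule.map (g : V →ₗ[F] V) V₂ = V₂ ∧
            Submodule.map (g : V →ₗ[F] V) W = W') ↔
          (Module.finrank F ↥(W ⊓ V₁) = Module.finrank F ↥(W' ⊓ V₁) ∧
           Module.finrank F ↥(W ⊓ V₂) = Module.finrank F ↥(W' ⊓ V₂)))) ∧
    (∀ r s : ℕ,
        (∃ W : Submodule F V, Module.finrank F W = n ∧
            Module.finrank F ↥(W ⊓ V₁) = r ∧ Module.finrank F ↥(W ⊓ V₂) = s) ↔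
          r + s ≤ n) := by
  refine ⟨fun W W' hW hW' => ⟨?_, fun ⟨hr, hs⟩ => ?_⟩, fun r s => ⟨?_, fun hrs => ?_⟩⟩
  · rintro ⟨g, hg₁, hg₂, rfl⟩
    exact ⟨by rw [← finrank_map_inf_map g W V₁, hg₁], by rw [← finrank_map_inf_map g W V₂, hg₂]⟩
  · exact exists_linearEquiv_map_eq_of_finrank_eq hc (hW.trans hW'.symm) hr hs
  · rintro ⟨W, hW, rfl, rfl⟩
    exact hW ▸ finrank_inf_add_finrank_inf_le hc.disjoint W
  · obtain ⟨W, hW, hr, hs⟩ := exists_finrank_inf_eq hc (r := r) (s := s) (t := n - r - s)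
      (p := s) (q := r) (by omega) (by omega)
    exact ⟨W, by omega, hr, hs⟩

theorem stmt_5 (F : Type*) [Field F] [Finite F] (V : Type*)
    [AddCommGroup V] [Module F V] [FiniteDimensional F V]
    (n : ℕ) (hV : Module.finrank F V = 2 * n)
    (V₁ V₂ : Submodule F V) (hc : IsCompl V₁ V₂)
    (h₁ : Module.finrank F V₁ = n) (h₂ : Module.finrank F V₂ = n) :
    (∀ W W' : Submodule F V,
        Module.finrank F W = n → Module.finrank F W' = n →
        ((∃ g : V ≃ₗ[F] V,
            Submodule.map (g : V →ₗ[F] V) V₁ = V₁ ∧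
            Submodule.map (g : V →ₗ[F] V) V₂ = V₂ ∧
            Submodule.map (g : V →ₗ[F] V) W = W') ↔
          (Module.finrank F ↥(W ⊓ V₁) = Module.finrank F ↥(W' ⊓ V₁) ∧
           Module.finrank F ↥(W ⊓ V₂) = Module.finrank F ↥(W' ⊓ V₂)))) ∧
    (∀ r s : ℕ,
        (∃ W : Submodule F V, Module.finrank F W = n ∧
            Module.finrank F ↥(W ⊓ V₁) = r ∧ Module.finrank F ↥(W ⊓ V₂) = s) ↔
          r + s ≤ n) :=
  stmt_5_general F V n V₁ V₂ hc h₁ h₂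
end

section
/- Let q be a prime power, n ≥ 1, and let C be a cyclic group of order q^{2n} − 1 (e.g. C = 𝔽_{q^{2n}}^×). Let θ : C → ℂ^× be a homomorphism such that the n homomorphisms θ^{q^{2i}} (x ↦ θ(x)^{q^{2i}} interpreted as θ composed with the power map x ↦ x^{q^{2i}}) for 0 ≤ i < n are pairwise distinct. If there exists an odd integer j with 1 ≤ j < 2n such that θ(x)·θ(x^{q^j}) = 1 for all x ∈ C, then n is odd. -/
/-!
Applying the relation `θ(x) θ(x^{q^j}) = 1` twice gives `θ ∘ (·)^{q^{2j}} = θ`. Since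
`x^{q^{2n}} = x` on `C`, the twists `k ↦ θ ∘ (·)^{q^{2k}}` are `n`-periodic, so the twist at `j`
equals the twist at `j mod n`; regularity forces `j mod n = 0`. Thus `n ∣ j`, and `j` is odd.
-/

open Function

theorem pow_card_add_one {G : Type*} [Group G] (x : G) : x ^ (Nat.card G + 1) = x := by
  rw [pow_succ, pow_card_eq_one', one_mul]

namespace MonoidHom

variable {G M : Type*} [CommMonoid G] [Monoid M]

@[simp]
theorem comp_powMonoidHom_one (θ : G →* M) : θ.comp (powMonoidHom 1) = θ := by
  ext x
  simp

theorem comp_powMonoidHom_mul_self_of_mul_eq_one {N : Type*} [Group N] (θ : G →* N) {a : ℕ}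
    (h : ∀ x, θ x * θ (x ^ a) = 1) : θ.comp (powMonoidHom (a * a)) = θ := by
  ext x
  have hinv : ∀ y, θ (y ^ a) = (θ y)⁻¹ := fun y => eq_inv_of_mul_eq_one_right (h y)
  simp only [comp_apply, powMonoidHom_apply, pow_mul, hinv, inv_inv]

theorem periodic_comp_powMonoidHom_pow (θ : G →* M) {b m : ℕ} (hb : ∀ x : G, x ^ b ^ m = x) :
    Periodic (fun k => θ.comp (powMonoidHom (b ^ k))) m := by
  intro k
  ext x
  simp only [comp_apply, powMonoidHom_apply, pow_add, pow_mul, hb]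

end MonoidHom

theorem stmt_12_general (q n : ℕ) (hq : 2 ≤ q) (hn : 1 ≤ n)
    (C : Type*) [CommGroup C]
    (hC : Nat.card C = q ^ (2 * n) - 1)
    (θ : C →* ℂˣ)
    (hreg : ∀ i i' : ℕ, i < n → i' < n →
      θ.comp (powMonoidHom (q ^ (2 * i))) = θ.comp (powMonoidHom (q ^ (2 * i'))) → i = i')
    (hrel : ∃ j : ℕ, Odd j ∧ 1 ≤ j ∧ j < 2 * n ∧ ∀ x : C, θ x * θ (x ^ q ^ j) = 1) :
    Odd n := by
  obtain ⟨j, hj, -, -, hrel⟩ := hrel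
  have hfrob : ∀ x : C, x ^ (q ^ 2) ^ n = x := by
    have : 1 ≤ q ^ (2 * n) := Nat.one_le_pow _ _ (by omega)
    intro x
    rw [← pow_mul, show q ^ (2 * n) = Nat.card C + 1 by omega, pow_card_add_one]
  have hper := θ.periodic_comp_powMonoidHom_pow hfrob
  have hfix : θ.comp (powMonoidHom ((q ^ 2) ^ j)) = θ := by
    rw [← pow_mul, two_mul, pow_add]
    exact θ.comp_powMonoidHom_mul_self_of_mul_eq_one hrel
  have hmod : j % n = 0 := by
    refine hreg (j % n) 0 (Nat.mod_lt _ hn) hn ?_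
    simpa only [pow_mul, pow_zero, MonoidHom.comp_powMonoidHom_one] using
      (hper.map_mod_nat j).trans hfix
  exact hj.of_dvd_nat (Nat.dvd_of_mod_eq_zero hmod)

theorem stmt_12 (q n : ℕ) (hq : 2 ≤ q) (hn : 1 ≤ n)
    (C : Type*) [CommGroup C] [Fintype C] [IsCyclic C]
    (hC : Nat.card C = q ^ (2 * n) - 1)
    (θ : C →* ℂˣ)
    (hreg : ∀ i i' : ℕ, i < n → i' < n →
      θ.comp (powMonoidHom (q ^ (2 * i))) = θ.comp (powMonoidHom (q ^ (2 * i'))) → i = i')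
    (hrel : ∃ j : ℕ, Odd j ∧ 1 ≤ j ∧ j < 2 * n ∧ ∀ x : C, θ x * θ (x ^ q ^ j) = 1) :
    Odd n :=
  stmt_12_general q n hq hn C hC θ hreg hrel
end
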